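/- Expectation of a product of two third-order Wick polynomials of centered variables with vanishing third cumulants expands into pairings plus higher cumulant terms: if all first and third order joint cumulants of a_1,...,a_6 vanish, then E[:a_1a_2a_3:·:a_4a_5a_6:] = Σ over the 6 pairings matching {1,2,3} with {4,5,6} of the products κ(a_i,a_j)κ(a_k,a_l)κ(a_m,a_n), plus κ(a_1,...,a_6), plus the 9 terms of the form κ_2·κ_4 in which the pair and the quadruple each intersect both {1,2,3} and {4,5,6}. -/

import Mathlib

open MeasureTheory Finset

/-- The moment `E[y^A]` of the labeled family `(y i)_{i ∈ A}`. -/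
noncomputable def mom {Ω : Type*} [MeasurableSpace Ω] {ι : Type*}
    (μ : Measure Ω) (y : ι → Ω → ℝ) (A : Finset ι) : ℝ :=
  ∫ ω, ∏ i ∈ A, y i ω ∂μ

open scoped Classical in
/-- Set partitions of a finite (label) set `A`: finsets of nonempty pairwise
disjoint blocks whose union is `A`. -/
noncomputable def partitionsOf {ι : Type*} (A : Finset ι) : Finset (Finset (Finset ι)) :=
  A.powerset.powerset.filter fun π =>
    (∀ B ∈ π, B.Nonempty) ∧ (∀ B ∈ π, ∀ C ∈ π, B ≠ C → Disjoint B C) ∧ π.sup id = A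

/-- The joint cumulant `κ[y_A]`, defined by the (Möbius-inverted form of the)
moments-to-cumulants recursion. -/
noncomputable def cum {Ω : Type*} [MeasurableSpace Ω] {ι : Type*}
    (μ : Measure Ω) (y : ι → Ω → ℝ) (A : Finset ι) : ℝ :=
  ∑ π ∈ partitionsOf A,
    (-1 : ℝ) ^ (π.card - 1) * (Nat.factorial (π.card - 1)) * ∏ B ∈ π, mom μ y B

/-- The Wick polynomial `:y^I:` defined by the recursion
`:y^I: = y^I − Σ_{∅≠E⊆I} E[y^E]·:y^{I∖E}:`, with `:y^∅: = 1`. -/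
noncomputable def wick {Ω : Type*} [MeasurableSpace Ω] {ι : Type*} [DecidableEq ι]
    (μ : Measure Ω) (y : ι → Ω → ℝ) (I : Finset ι) : Ω → ℝ :=
  fun ω => (∏ i ∈ I, y i ω) -
    ∑ E ∈ (I.powerset.filter fun E => E ≠ ∅).attach,
      mom μ y E.1 * wick μ y (I \ E.1) ω
termination_by I.card
decreasing_by
  have h := E.2
  simp only [Finset.mem_filter, Finset.mem_powerset] at h
  exact Finset.card_lt_card (Finset.sdiff_ssubset h.1 (Finset.nonempty_iff_ne_empty.mpr h.2))

/-!
Both sides are polynomials in the moments. Each Wick polynomial is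
`:y^I: = ∑_{E ⊆ I} c_E y^{I \ E}` with constants `c_E`, so the left side is a sum of moments.
A partition of `insert a A` is a block `insert a S` together with a partition of `A \ S`, and
this recursion expresses the cumulants on the right through moments. Vanishing first and third
cumulants is the same as vanishing first and third moments, which kills most terms; what is left
on both sides is the same polynomial in the moments of order 2, 4 and 6.
-/

section Splits

variable {ι M : Type*} [DecidableEq ι] [AddCommMonoid M]

def sumSplits (A : Finset ι) (g : Finset ι → Finset ι → M) : M :=
  ∑ S ∈ A.powerset, g S (A \ S)

@[simp]
lemma sumSplits_empty (g : Finset ι → Finset ι → M) : sumSplits ∅ g = g ∅ ∅ := by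
  simp [sumSplits]

@[simp]
lemma sumSplits_insert {b : ι} {A : Finset ι} (hb : b ∉ A) (g : Finset ι → Finset ι → M) :
    sumSplits (insert b A) g = sumSplits A fun S T => g (insert b S) T + g S (insert b T) := by
  rw [sumSplits, sumSplits, Finset.sum_powerset_insert hb, add_comm, ← Finset.sum_add_distrib]
  refine Finset.sum_congr rfl fun S hS => ?_
  have hbS : b ∉ S := fun h => hb (Finset.mem_powerset.mp hS h)
  rw [Finset.insert_sdiff_insert, Finset.sdiff_insert_of_notMem hb,
    Finset.insert_sdiff_of_notMem _ hbS]

@[simp]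
lemma sumSplits_singleton (b : ι) (g : Finset ι → Finset ι → M) :
    sumSplits {b} g = g {b} ∅ + g ∅ {b} := by
  rw [← insert_empty_eq b, sumSplits_insert (Finset.notMem_empty b)]
  simp

lemma sum_powerset_sum_powerset_sdiff (I : Finset ι) (f : Finset ι → Finset ι → M) :
    ∑ E ∈ I.powerset, ∑ G ∈ (I \ E).powerset, f E G =
      ∑ F ∈ I.powerset, ∑ E ∈ F.powerset, f E (F \ E) := calc
  _ = ∑ E ∈ I.powerset, ∑ F ∈ I.powerset.filter (E ⊆ ·), f E (F \ E) := by
    refine Finset.sum_congr rfl fun E hE => ?_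
    rw [Finset.mem_powerset] at hE
    have hcancel : ∀ G ∈ (I \ E).powerset, (E ∪ G) \ E = G := fun G hG =>
      Finset.union_sdiff_cancel_left
        (Finset.disjoint_of_subset_right (Finset.mem_powerset.mp hG) Finset.disjoint_sdiff)
    refine Finset.sum_nbij' (E ∪ ·) (· \ E) (fun G hG => ?_) (fun F hF => ?_) hcancel
      (fun F hF => Finset.union_sdiff_of_subset (Finset.mem_filter.mp hF).2)
      (fun G hG => by rw [hcancel G hG])
    · rw [Finset.mem_powerset] at hG
      rw [Finset.mem_filter, Finset.mem_powerset]
      exact ⟨Finset.union_subset hE (hG.trans Finset.sdiff_subset), Finset.subset_union_left⟩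
    · rw [Finset.mem_filter, Finset.mem_powerset] at hF
      exact Finset.mem_powerset.mpr (Finset.sdiff_subset_sdiff hF.1 le_rfl)
  _ = _ := Finset.sum_comm' fun E F => by
    simp only [Finset.mem_powerset, Finset.mem_filter]
    exact ⟨fun h => ⟨h.2.2, h.2.1⟩, fun h => ⟨h.1.trans h.2, h.2, h.1⟩⟩

end Splits

section Partitions

variable {ι : Type*} [DecidableEq ι]

lemma mem_partitionsOf {A : Finset ι} {π : Finset (Finset ι)} :
    π ∈ partitionsOf A ↔ (∀ B ∈ π, B.Nonempty) ∧
      (∀ B ∈ π, ∀ C ∈ π, B ≠ C → Disjoint B C) ∧ π.sup id = A := by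
  have hdef : partitionsOf A = A.powerset.powerset.filter fun π => (∀ B ∈ π, B.Nonempty) ∧
      (∀ B ∈ π, ∀ C ∈ π, B ≠ C → Disjoint B C) ∧ π.sup id = A := by
    unfold partitionsOf
    congr!
  rw [hdef, Finset.mem_filter, Finset.mem_powerset, and_iff_right_iff_imp]
  intro h B hB
  rw [Finset.mem_powerset, ← h.2.2]
  exact Finset.le_sup (f := id) hB

lemma subset_of_mem_partitionsOf {A B : Finset ι} {π : Finset (Finset ι)}
    (hπ : π ∈ partitionsOf A) (hB : B ∈ π) : B ⊆ A := by
  rw [← (mem_partitionsOf.mp hπ).2.2]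
  exact Finset.le_sup (f := id) hB

lemma partitionsOf_empty : partitionsOf (∅ : Finset ι) = {∅} := by
  ext π
  rw [Finset.mem_singleton]
  refine ⟨fun hπ => Finset.eq_empty_of_forall_notMem fun B hB => ?_, ?_⟩
  · exact ((mem_partitionsOf.mp hπ).1 B hB).ne_empty
      (Finset.subset_empty.mp (subset_of_mem_partitionsOf hπ hB))
  · rintro rfl
    simp [mem_partitionsOf]

variable {a : ι} {A : Finset ι}

lemma insert_mem_partitionsOf_insert (ha : a ∉ A) {S : Finset ι} (hS : S ⊆ A)
    {π : Finset (Finset ι)} (hπ : π ∈ partitionsOf (A \ S)) :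
    insert (insert a S) π ∈ partitionsOf (insert a A) := by
  obtain ⟨hne, hdisj, hsup⟩ := mem_partitionsOf.mp hπ
  have hblock : ∀ C ∈ π, Disjoint (insert a S) C := fun C hC => by
    have hCA := subset_of_mem_partitionsOf hπ hC
    rw [Finset.disjoint_insert_left]
    exact ⟨fun h => ha (Finset.sdiff_subset (hCA h)),
      Finset.disjoint_of_subset_right hCA Finset.disjoint_sdiff⟩
  refine mem_partitionsOf.mpr ⟨Finset.forall_mem_insert _ _ _ |>.mpr
    ⟨Finset.insert_nonempty _ _, hne⟩, ?_, ?_⟩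
  · simp only [Finset.mem_insert]
    rintro B (rfl | hB) C (rfl | hC) hBC
    · exact absurd rfl hBC
    · exact hblock C hC
    · exact (hblock B hB).symm
    · exact hdisj B hB C hC hBC
  · rw [Finset.sup_insert, hsup, id, Finset.sup_eq_union, Finset.insert_union,
      Finset.union_sdiff_of_subset hS]

lemma exists_eq_insert_of_mem_partitionsOf_insert (ha : a ∉ A) {π : Finset (Finset ι)}
    (hπ : π ∈ partitionsOf (insert a A)) :
    ∃ S ⊆ A, ∃ π' ∈ partitionsOf (A \ S), π = insert (insert a S) π' := by
  obtain ⟨hne, hdisj, hsup⟩ := mem_partitionsOf.mp hπ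
  obtain ⟨B, hB, haB⟩ : ∃ B ∈ π, a ∈ B := by
    simpa using Finset.mem_sup.mp (hsup ▸ Finset.mem_insert_self a A)
  have hBS : B = insert a (B.erase a) := (Finset.insert_erase haB).symm
  have hBrest : Disjoint B ((π.erase B).sup id) := Finset.disjoint_sup_right.mpr
    fun C hC => hdisj B hB C (Finset.mem_of_mem_erase hC) (Finset.ne_of_mem_erase hC).symm
  have hsplit : B ∪ (π.erase B).sup id = insert a A := by
    rw [← hsup, ← Finset.insert_erase hB, Finset.sup_insert, Finset.erase_insert_eq_erase,
      Finset.erase_idem]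
    rfl
  have hrest : (π.erase B).sup id = A \ B.erase a := calc
    _ = (B ∪ (π.erase B).sup id) \ B := (Finset.union_sdiff_cancel_left hBrest).symm
    _ = insert a A \ insert a (B.erase a) := by rw [hsplit, ← hBS]
    _ = A \ B.erase a := by rw [Finset.insert_sdiff_insert, Finset.sdiff_insert_of_notMem ha]
  refine ⟨B.erase a, fun x hx => ?_, π.erase B, mem_partitionsOf.mpr ⟨fun C hC => hne C
    (Finset.mem_of_mem_erase hC), fun C hC D hD => hdisj C (Finset.mem_of_mem_erase hC) D
    (Finset.mem_of_mem_erase hD), hrest⟩, by rw [← hBS, Finset.insert_erase hB]⟩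
  have hxB := Finset.mem_of_mem_erase hx
  rcases Finset.mem_insert.mp (subset_of_mem_partitionsOf hπ hB hxB) with rfl | hxA
  · exact absurd hx (Finset.notMem_erase x B)
  · exact hxA

lemma sum_partitionsOf_insert {M : Type*} [AddCommMonoid M] (ha : a ∉ A)
    (f : Finset (Finset ι) → M) :
    ∑ π ∈ partitionsOf (insert a A), f π =
      ∑ S ∈ A.powerset, ∑ π ∈ partitionsOf (A \ S), f (insert (insert a S) π) := by
  have hnot : ∀ {S T : Finset ι} {π : Finset (Finset ι)}, π ∈ partitionsOf (A \ S) →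
      insert a T ∉ π := fun hπ hmem =>
    ha (Finset.sdiff_subset (subset_of_mem_partitionsOf hπ hmem (Finset.mem_insert_self a _)))
  rw [Finset.sum_sigma']
  refine (Finset.sum_bij (fun x _ => insert (insert a x.1) x.2) ?_ ?_ ?_ fun _ _ => rfl).symm
  · rintro ⟨S, π⟩ h
    rw [Finset.mem_sigma, Finset.mem_powerset] at h
    exact insert_mem_partitionsOf_insert ha h.1 h.2
  · rintro ⟨S₁, π₁⟩ h₁ ⟨S₂, π₂⟩ h₂ heq
    rw [Finset.mem_sigma, Finset.mem_powerset] at h₁ h₂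
    dsimp only at h₁ h₂ heq
    have haS : ∀ {S : Finset ι}, S ⊆ A → a ∉ S := fun hS h => ha (hS h)
    have hS : insert a S₁ = insert a S₂ := by
      rcases Finset.mem_insert.mp (heq ▸ Finset.mem_insert_self (insert a S₁) π₁) with h | h
      · exact h
      · exact absurd h (hnot h₂.2)
    obtain rfl : S₁ = S₂ := by
      rw [← Finset.erase_insert (haS h₁.1), hS, Finset.erase_insert (haS h₂.1)]
    obtain rfl : π₁ = π₂ := by
      rw [← Finset.erase_insert (hnot h₁.2), heq, Finset.erase_insert (hnot h₂.2)]
    rfl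
  · intro π hπ
    obtain ⟨S, hS, π', hπ', rfl⟩ := exists_eq_insert_of_mem_partitionsOf_insert ha hπ
    exact ⟨⟨S, π'⟩, Finset.mem_sigma.mpr ⟨Finset.mem_powerset.mpr hS, hπ'⟩, rfl⟩

end Partitions

section Cumulants

variable {Ω ι : Type*} [MeasurableSpace Ω] (μ : Measure Ω) (y : ι → Ω → ℝ)

noncomputable def cumWeight (n : ℕ) : ℝ := (-1) ^ (n - 1) * (n - 1).factorial

/-- `cum` with every partition weighted as if it had `k` more blocks. Removing the block of one
element adds a block to the count, so the recursion `cumShift_insert` closes on this family. -/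
noncomputable def cumShift (k : ℕ) (A : Finset ι) : ℝ :=
  ∑ π ∈ partitionsOf A, cumWeight (π.card + k) * ∏ B ∈ π, mom μ y B

lemma cum_eq_cumShift (A : Finset ι) : cum μ y A = cumShift μ y 0 A := rfl

variable [DecidableEq ι]

lemma cumShift_empty (k : ℕ) : cumShift μ y k ∅ = cumWeight k := by
  simp [cumShift, partitionsOf_empty]

lemma cumShift_insert (k : ℕ) {a : ι} {A : Finset ι} (ha : a ∉ A) :
    cumShift μ y k (insert a A) =
      sumSplits A fun S T => mom μ y (insert a S) * cumShift μ y (k + 1) T := by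
  rw [cumShift, sum_partitionsOf_insert ha, sumSplits]
  refine Finset.sum_congr rfl fun S _ => ?_
  rw [cumShift, Finset.mul_sum]
  refine Finset.sum_congr rfl fun π hπ => ?_
  have hnew : insert a S ∉ π := fun h =>
    ha (Finset.sdiff_subset (subset_of_mem_partitionsOf hπ h (Finset.mem_insert_self a S)))
  rw [Finset.card_insert_of_notMem hnew, Finset.prod_insert hnew, add_assoc, add_comm 1 k]
  ring

lemma cumShift_singleton (k : ℕ) (i : ι) :
    cumShift μ y k {i} = cumWeight (k + 1) * mom μ y {i} := by
  rw [← insert_empty_eq i, cumShift_insert μ y k (Finset.notMem_empty i)]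
  simp [cumShift_empty, mul_comm]

variable {μ y}

lemma cumShift_pair (k : ℕ) (h1 : ∀ B : Finset ι, B.card = 1 → mom μ y B = 0) {i j : ι}
    (hij : i ≠ j) : cumShift μ y k {i, j} = cumWeight (k + 1) * mom μ y {i, j} := by
  rw [cumShift_insert μ y k (by simpa using hij)]
  simp [cumShift_empty, cumShift_singleton, h1, mul_comm]

lemma cumShift_four (k : ℕ) (h1 : ∀ B : Finset ι, B.card = 1 → mom μ y B = 0)
    (h3 : ∀ B : Finset ι, B.card = 3 → mom μ y B = 0) {i j l m : ι}
    (hij : i ≠ j) (hil : i ≠ l) (him : i ≠ m) (hjl : j ≠ l) (hjm : j ≠ m) (hlm : l ≠ m) :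
    cumShift μ y k {i, j, l, m} = cumWeight (k + 1) * mom μ y {i, j, l, m} +
      cumWeight (k + 1 + 1) * (mom μ y {i, j} * mom μ y {l, m} +
        mom μ y {i, l} * mom μ y {j, m} + mom μ y {i, m} * mom μ y {j, l}) := by
  rw [cumShift_insert μ y k (by simp [hij, hil, him])]
  simp [cumShift_empty, cumShift_singleton, cumShift_pair _ h1, *]
  ring

lemma cum_singleton (i : ι) : cum μ y {i} = mom μ y {i} := by
  simp [cum_eq_cumShift, cumShift_singleton, cumWeight]

lemma cum_pair (h1 : ∀ B : Finset ι, B.card = 1 → mom μ y B = 0) {i j : ι} (hij : i ≠ j) :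
    cum μ y {i, j} = mom μ y {i, j} := by
  simp [cum_eq_cumShift, cumShift_pair _ h1 hij, cumWeight]

lemma cum_triple (h1 : ∀ B : Finset ι, B.card = 1 → mom μ y B = 0) {i j l : ι}
    (hij : i ≠ j) (hil : i ≠ l) (hjl : j ≠ l) : cum μ y {i, j, l} = mom μ y {i, j, l} := by
  rw [cum_eq_cumShift, cumShift_insert μ y 0 (by simp [hij, hil])]
  simp [cumShift_empty, cumShift_singleton, cumShift_pair _ h1, cumWeight, *]

lemma cum_four (h1 : ∀ B : Finset ι, B.card = 1 → mom μ y B = 0)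
    (h3 : ∀ B : Finset ι, B.card = 3 → mom μ y B = 0) {i j l m : ι}
    (hij : i ≠ j) (hil : i ≠ l) (him : i ≠ m) (hjl : j ≠ l) (hjm : j ≠ m) (hlm : l ≠ m) :
    cum μ y {i, j, l, m} = mom μ y {i, j, l, m} - (mom μ y {i, j} * mom μ y {l, m} +
      mom μ y {i, l} * mom μ y {j, m} + mom μ y {i, m} * mom μ y {j, l}) := by
  rw [cum_eq_cumShift, cumShift_four 0 h1 h3 hij hil him hjl hjm hlm]
  norm_num [cumWeight]
  ring

end Cumulants

section Wick

variable {Ω ι : Type*} [MeasurableSpace Ω] [DecidableEq ι] (μ : Measure Ω) (y : ι → Ω → ℝ)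

/-- The constant term of `:y^E:`: the recursion of `wick` with `y^E` replaced by `[E = ∅]`. -/
noncomputable def wickCoeff (E : Finset ι) : ℝ :=
  (if E = ∅ then 1 else 0) -
    ∑ F ∈ (E.powerset.filter fun F => F ≠ ∅).attach, mom μ y F.1 * wickCoeff (E \ F.1)
termination_by E.card
decreasing_by
  have h := F.2
  simp only [Finset.mem_filter, Finset.mem_powerset] at h
  exact Finset.card_lt_card (Finset.sdiff_ssubset h.1 (Finset.nonempty_iff_ne_empty.mpr h.2))

lemma wickCoeff_eq_sub (E : Finset ι) : wickCoeff μ y E = (if E = ∅ then 1 else 0) -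
    ∑ F ∈ E.powerset.filter (· ≠ ∅), mom μ y F * wickCoeff μ y (E \ F) := by
  rw [wickCoeff.eq_def, Finset.sum_attach _ fun F => mom μ y F * wickCoeff μ y (E \ F)]

lemma wick_eq_sub (I : Finset ι) (ω : Ω) : wick μ y I ω = ∏ i ∈ I, y i ω -
    ∑ E ∈ I.powerset.filter (· ≠ ∅), mom μ y E * wick μ y (I \ E) ω := by
  rw [wick.eq_def, Finset.sum_attach _ fun E => mom μ y E * wick μ y (I \ E) ω]

lemma wick_eq_sumSplits (I : Finset ι) (ω : Ω) :
    wick μ y I ω = sumSplits I fun E F => wickCoeff μ y E * ∏ i ∈ F, y i ω := by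
  induction I using Finset.strongInduction with
  | H I ih =>
  set g : Finset ι → Finset ι → ℝ :=
    fun E G => if E = ∅ then 0 else mom μ y E * wickCoeff μ y G * ∏ i ∈ (I \ E) \ G, y i ω
  have hinner : ∀ E ∈ I.powerset, (if E ≠ ∅ then mom μ y E * wick μ y (I \ E) ω else 0) =
      ∑ G ∈ (I \ E).powerset, g E G := by
    intro E hE
    by_cases hE0 : E = ∅
    · simp [g, hE0]
    rw [if_pos hE0, ih _ (Finset.sdiff_ssubset (Finset.mem_powerset.mp hE)
      (Finset.nonempty_iff_ne_empty.mpr hE0)), sumSplits, Finset.mul_sum]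
    simp only [g, if_neg hE0, mul_assoc]
  have hsdiff : ∀ F, ∀ E ∈ F.powerset, (I \ E) \ (F \ E) = I \ F := fun F E hE => by
    rw [sdiff_sdiff_left, Finset.sup_eq_union,
      Finset.union_sdiff_of_subset (Finset.mem_powerset.mp hE)]
  calc wick μ y I ω
      = ∏ i ∈ I, y i ω - ∑ E ∈ I.powerset, ∑ G ∈ (I \ E).powerset, g E G := by
        rw [wick_eq_sub, Finset.sum_filter, Finset.sum_congr rfl hinner]
    _ = ∏ i ∈ I, y i ω - ∑ F ∈ I.powerset, ∑ E ∈ F.powerset, g E (F \ E) := by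
        rw [sum_powerset_sum_powerset_sdiff]
    _ = sumSplits I fun E F => wickCoeff μ y E * ∏ i ∈ F, y i ω := by
        have hterm : ∀ F ∈ I.powerset, wickCoeff μ y F * ∏ i ∈ I \ F, y i ω =
            (if F = ∅ then ∏ i ∈ I, y i ω else 0) - ∑ E ∈ F.powerset, g E (F \ E) := by
          intro F _
          rw [wickCoeff_eq_sub μ y F, sub_mul, Finset.sum_mul, Finset.sum_filter]
          congr 1
          · split_ifs with h <;> simp [h]
          · refine Finset.sum_congr rfl fun E hE => ?_
            simp only [g, hsdiff F E hE]
            split_ifs <;> simp_all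
        rw [sumSplits, Finset.sum_congr rfl hterm, Finset.sum_sub_distrib, Finset.sum_ite_eq',
          if_pos (Finset.empty_mem_powerset I)]

lemma integral_wick_mul_wick (hint : ∀ A : Finset ι, Integrable (fun ω => ∏ i ∈ A, y i ω) μ)
    {I J : Finset ι} (hIJ : Disjoint I J) :
    ∫ ω, wick μ y I ω * wick μ y J ω ∂μ = sumSplits I fun E F => sumSplits J fun E' F' =>
      wickCoeff μ y E * wickCoeff μ y E' * mom μ y (F ∪ F') := by
  have hprod : ∀ ω, wick μ y I ω * wick μ y J ω = ∑ E ∈ I.powerset, ∑ E' ∈ J.powerset,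
      wickCoeff μ y E * wickCoeff μ y E' * ∏ i ∈ (I \ E) ∪ (J \ E'), y i ω := fun ω => by
    rw [wick_eq_sumSplits, wick_eq_sumSplits, sumSplits, sumSplits, Finset.sum_mul_sum]
    refine Finset.sum_congr rfl fun E _ => Finset.sum_congr rfl fun E' _ => ?_
    rw [Finset.prod_union (Finset.disjoint_of_subset_left Finset.sdiff_subset
      (Finset.disjoint_of_subset_right Finset.sdiff_subset hIJ))]
    ring
  simp_rw [hprod]
  rw [integral_finsetSum _ fun E _ => integrable_finsetSum _ fun E' _ => (hint _).const_mul _]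
  refine Finset.sum_congr rfl fun E _ => ?_
  rw [integral_finsetSum _ fun E' _ => (hint _).const_mul _]
  exact Finset.sum_congr rfl fun E' _ => integral_const_mul _ _

lemma wickCoeff_empty : wickCoeff μ y ∅ = 1 := by
  rw [wickCoeff_eq_sub]
  simp [Finset.filter_singleton]

lemma wickCoeff_eq_neg_sumSplits {E : Finset ι} (hE : E ≠ ∅) :
    wickCoeff μ y E =
      -sumSplits E fun F G => if F = ∅ then 0 else mom μ y F * wickCoeff μ y G := by
  rw [wickCoeff_eq_sub, if_neg hE, zero_sub, Finset.sum_filter, sumSplits]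
  simp only [ite_not]

lemma wickCoeff_singleton (i : ι) : wickCoeff μ y {i} = -mom μ y {i} := by
  rw [wickCoeff_eq_neg_sumSplits μ y (Finset.singleton_ne_empty i)]
  simp [wickCoeff_empty]

variable {μ y}

lemma wickCoeff_pair (h1 : ∀ B : Finset ι, B.card = 1 → mom μ y B = 0) {i j : ι}
    (hij : i ≠ j) : wickCoeff μ y {i, j} = -mom μ y {i, j} := by
  rw [wickCoeff_eq_neg_sumSplits μ y (Finset.insert_ne_empty i {j})]
  simp [wickCoeff_empty, wickCoeff_singleton, h1, hij]

lemma wickCoeff_triple (h1 : ∀ B : Finset ι, B.card = 1 → mom μ y B = 0)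
    (h3 : ∀ B : Finset ι, B.card = 3 → mom μ y B = 0) {i j l : ι}
    (hij : i ≠ j) (hil : i ≠ l) (hjl : j ≠ l) : wickCoeff μ y {i, j, l} = 0 := by
  rw [wickCoeff_eq_neg_sumSplits μ y (Finset.insert_ne_empty i _)]
  simp [wickCoeff_empty, wickCoeff_singleton, wickCoeff_pair h1, *]

end Wick

lemma sum_perm_fin_three {R : Type*} [CommSemiring R] (f : Fin 3 → Fin 3 → R) :
    ∑ τ : Equiv.Perm (Fin 3), ∏ m, f m (τ m) =
      f 0 0 * f 1 1 * f 2 2 + f 0 0 * f 1 2 * f 2 1 + f 0 1 * f 1 0 * f 2 2 +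
      f 0 1 * f 1 2 * f 2 0 + f 0 2 * f 1 0 * f 2 1 + f 0 2 * f 1 1 * f 2 0 := by
  rw [show (Finset.univ : Finset (Equiv.Perm (Fin 3))) =
      {1, Equiv.swap 1 2, Equiv.swap 0 1, Equiv.swap 0 1 * Equiv.swap 1 2,
        Equiv.swap 1 2 * Equiv.swap 0 1, Equiv.swap 0 2} by decide]
  simp +decide [Fin.prod_univ_three, Equiv.swap_apply_def]
  ring

/-- expectation of a product of two third-order Wick polynomials,
when first and third cumulants vanish, expands into the 6 crossing pairings,
the sixth cumulant, and the 9 crossing `κ₂·κ₄` terms. -/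
theorem wick3_product_expansion {Ω : Type*} [MeasurableSpace Ω]
    (μ : Measure Ω) (a : Fin 6 → Ω → ℝ)
    (hint : ∀ A : Finset (Fin 6), Integrable (fun ω => ∏ i ∈ A, a i ω) μ)
    (h1 : ∀ i : Fin 6, cum μ a {i} = 0)
    (h3 : ∀ A : Finset (Fin 6), A.card = 3 → cum μ a A = 0) :
    (∫ ω, wick μ a ({0, 1, 2} : Finset (Fin 6)) ω *
        wick μ a ({3, 4, 5} : Finset (Fin 6)) ω ∂μ)
      = (∑ τ : Equiv.Perm (Fin 3), ∏ m : Fin 3,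
            cum μ a {(⟨m.1, by omega⟩ : Fin 6), (⟨(τ m).1 + 3, by omega⟩ : Fin 6)})
        + cum μ a Finset.univ
        + ∑ p ∈ ({0, 1, 2} : Finset (Fin 6)), ∑ q ∈ ({3, 4, 5} : Finset (Fin 6)),
            cum μ a {p, q} * cum μ a (Finset.univ \ {p, q}) := by
  have hm1 : ∀ B : Finset (Fin 6), B.card = 1 → mom μ a B = 0 := by
    intro B hB
    obtain ⟨i, rfl⟩ := Finset.card_eq_one.mp hB
    rw [← cum_singleton, h1]
  have hm3 : ∀ B : Finset (Fin 6), B.card = 3 → mom μ a B = 0 := by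
    intro B hB
    obtain ⟨i, j, l, hij, hil, hjl, rfl⟩ := Finset.card_eq_three.mp hB
    rw [← cum_triple hm1 hij hil hjl, h3 _ hB]
  rw [integral_wick_mul_wick μ a hint (by decide),
    sum_perm_fin_three fun m n =>
      cum μ a {(⟨m.1, by omega⟩ : Fin 6), (⟨n.1 + 3, by omega⟩ : Fin 6)},
    cum_eq_cumShift μ a Finset.univ,
    show (Finset.univ : Finset (Fin 6)) = {0, 1, 2, 3, 4, 5} from rfl,
    cumShift_insert μ a 0 (by decide)]
  -- Keeping `union_insert` out leaves every label set as a sorted `insert` chain, so that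
  -- equal moments are syntactically equal atoms for `ring`.
  simp [wickCoeff_empty, wickCoeff_singleton, wickCoeff_pair hm1, wickCoeff_triple hm1 hm3,
    cumShift_empty, cumShift_singleton, cumShift_pair _ hm1, cumShift_four _ hm1 hm3,
    cum_pair hm1, cum_four hm1 hm3, hm1, hm3, cumWeight, Finset.sdiff_eq_filter,
    Finset.filter_insert, Finset.filter_singleton, -Finset.union_insert, -Finset.union_singleton]
  ring
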